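/- arXiv:2605.22595 — 2 statements merged into one kernel-verified Lean document; each statement's English description precedes it below -/
import Mathlib

section
/- Let V be a module over ℝ, let n ≥ 1, let H be a real n×n matrix, and let Γ : Fin n → V satisfy H i j • Γ j = H j i • Γ i for all i, j. If the matrix I − H is invertible (IsUnit in the matrix ring), then for all indices i, j one has ((I − H)⁻¹) i j • Γ j = ((I − H)⁻¹) j i • Γ i. -/
open Polynomial Matrix

lemma fcar_pow_sym {V : Type*} [AddCommMonoid V] [Module ℝ V]
    {n : ℕ} (H : Matrix (Fin n) (Fin n) ℝ) (Γ : Fin n → V)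
    (hsym : ∀ i j, H i j • Γ j = H j i • Γ i) :
    ∀ k, ∀ i j, (H ^ k) i j • Γ j = (H ^ k) j i • Γ i := by
  intro k
  induction k with
  | zero =>
    intro i j
    by_cases h : i = j
    · subst h; rfl
    · simp [Matrix.one_apply_ne h, Matrix.one_apply_ne (Ne.symm h)]
  | succ k ih =>
    intro i j
    have h1 : (H ^ (k+1)) i j = ∑ l, (H ^ k) i l * H l j := by
      rw [pow_succ, Matrix.mul_apply]
    have h2 : (H ^ (k+1)) j i = ∑ l, H j l * (H ^ k) l i := by
      rw [pow_succ', Matrix.mul_apply]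
    rw [h1, h2, Finset.sum_smul, Finset.sum_smul]
    refine Finset.sum_congr rfl fun l _ => ?_
    calc ((H ^ k) i l * H l j) • Γ j = (H ^ k) i l • (H l j • Γ j) := by rw [smul_smul]
      _ = (H ^ k) i l • (H j l • Γ l) := by rw [hsym]
      _ = H j l • ((H ^ k) i l • Γ l) := by rw [smul_smul, smul_smul, mul_comm]
      _ = H j l • ((H ^ k) l i • Γ i) := by rw [ih]
      _ = (H j l * (H ^ k) l i) • Γ i := by rw [smul_smul]

lemma fcar_aeval_sym {V : Type*} [AddCommMonoid V] [Module ℝ V]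
    {n : ℕ} (H : Matrix (Fin n) (Fin n) ℝ) (Γ : Fin n → V)
    (hsym : ∀ i j, H i j • Γ j = H j i • Γ i) (p : ℝ[X]) :
    ∀ i j, (aeval H p) i j • Γ j = (aeval H p) j i • Γ i := by
  intro i j
  rw [Polynomial.aeval_eq_sum_range]
  simp only [Matrix.sum_apply, Matrix.smul_apply]
  rw [Finset.sum_smul, Finset.sum_smul]
  refine Finset.sum_congr rfl fun k _ => ?_
  rw [smul_eq_mul, smul_eq_mul, mul_smul, mul_smul, fcar_pow_sym H Γ hsym k]

/-- If `H i j • Γ j = H j i • Γ i` for all `i, j` and `I - H` is invertible,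
then `((I - H)⁻¹) i j • Γ j = ((I - H)⁻¹) j i • Γ i` for all `i, j`. -/
theorem fcar_symmetry_inv {V : Type*} [AddCommMonoid V] [Module ℝ V]
    {n : ℕ} (hn : 1 ≤ n) (H : Matrix (Fin n) (Fin n) ℝ) (Γ : Fin n → V)
    (hsym : ∀ i j, H i j • Γ j = H j i • Γ i)
    (hunit : IsUnit (1 - H)) :
    ∀ i j, ((1 - H)⁻¹) i j • Γ j = ((1 - H)⁻¹) j i • Γ i := by
  set M : Matrix (Fin n) (Fin n) ℝ := 1 - H with hM
  set q : ℝ[X] := M.charpoly with hq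
  set c : ℝ := q.coeff 0 with hc
  have hdet : IsUnit M.det := (Matrix.isUnit_iff_isUnit_det M).mp hunit
  have hcne : c ≠ 0 := by
    intro h
    have := Matrix.det_eq_sign_charpoly_coeff M
    rw [← hq, ← hc, h, mul_zero] at this
    rw [this] at hdet
    exact (not_isUnit_zero hdet : False)
  have haev : aeval M q = 0 := Matrix.aeval_self_charpoly M
  have hsplit : X * q.divX + C c = q := Polynomial.X_mul_divX_add q
  have hB : M * aeval M q.divX + c • (1 : Matrix (Fin n) (Fin n) ℝ) = 0 := by
    have := congrArg (aeval M) hsplit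
    simpa [map_add, _root_.map_mul, aeval_X, aeval_C, Algebra.algebraMap_eq_smul_one, haev] using this
  -- M * ((-c)⁻¹ • aeval M q.divX) = 1
  have hinv : M * ((-c)⁻¹ • aeval M q.divX) = 1 := by
    rw [Matrix.mul_smul]
    have h1 : M * aeval M q.divX = (-c) • (1 : Matrix (Fin n) (Fin n) ℝ) := by
      have := hB
      rw [add_eq_zero_iff_eq_neg] at this
      rw [this, neg_smul]
    rw [h1, smul_smul, inv_mul_cancel₀ (by simpa using hcne), one_smul]
  have hMinv : M⁻¹ = (-c)⁻¹ • aeval M q.divX := Matrix.inv_eq_right_inv hinv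
  -- express as polynomial in H
  set p : ℝ[X] := (-c)⁻¹ • (q.divX.comp (1 - X)) with hp
  have hpoly : M⁻¹ = aeval H p := by
    rw [hMinv, hp, _root_.map_smul]
    congr 1
    rw [Polynomial.aeval_comp]
    congr 1
    simp [hM]
  intro i j
  rw [hpoly]
  exact fcar_aeval_sym H Γ hsym p i j
end

section
/- Let W be a real symmetric n×n matrix with zero diagonal, and let η ∈ ℝ and λ > 0 be such that I − ηW is positive definite. Let Y be a random vector distributed according to the multivariate Gaussian measure on ℝⁿ with mean 0 and covariance λ (I − ηW)⁻¹. Then for each index i, the conditional expectation of Y_i given the σ-algebra generated by (Y_j)_{j ≠ i} equals η Σ_{j ≠ i} (W i j) Y_j almost surely. -/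
open MeasureTheory ProbabilityTheory Matrix
open scoped Classical

/-- The positive semidefinite square root of a positive semidefinite matrix, as defined in
the older Mathlib (`Matrix.PosSemidef.sqrt`, since removed). -/
noncomputable def Matrix.PosSemidef.sqrt {n 𝕜 : Type*} [Fintype n] [RCLike 𝕜] [PartialOrder 𝕜] [DecidableEq n]
    {A : Matrix n n 𝕜} (hA : A.PosSemidef) : Matrix n n 𝕜 :=
  (hA.1.eigenvectorUnitary : Matrix n n 𝕜) *
    diagonal (((↑) : ℝ → 𝕜) ∘ (√·) ∘ hA.1.eigenvalues) *
    (star hA.1.eigenvectorUnitary : Matrix n n 𝕜)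

/-- The standard Gaussian measure on `Fin n → ℝ` (mean 0, identity covariance). -/
noncomputable def stdGaussian (n : ℕ) : Measure (Fin n → ℝ) :=
  Measure.pi fun _ => gaussianReal 0 1

/-- The multivariate Gaussian measure on `Fin n → ℝ` with mean `0` and (positive
semidefinite) covariance matrix `S`. (Junk, the zero measure, if `S` is not positive
semidefinite.) -/
noncomputable def gaussianOfCov {n : ℕ} (S : Matrix (Fin n) (Fin n) ℝ) :
    Measure (Fin n → ℝ) :=
  if h : S.PosSemidef then (stdGaussian n).map (fun x => h.sqrt.mulVec x) else 0

/-! Write `B = 1 - η • W`, `S = lam • B⁻¹` and `Y = M X` with `M = √S` and `X` standard Gaussian.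
The residual `Z = Y i - η ∑_{j ≠ i} W i j * Y j` is `d ⬝ᵥ Y` for the row `d = B i`, and
`d ⬝ᵥ M X = c ⬝ᵥ X` with `c = Mᵀ d`. Since `M c = S d = lam • eᵢ`, the reflection of `X` in `c^⊥`
moves `X` only along `c`, so it fixes the coordinates `Y j`, `j ≠ i`, and flips the sign of `Z`;
being orthogonal, it also preserves the law of `X`. Hence `((Y j)_{j ≠ i}, Z)` and
`((Y j)_{j ≠ i}, -Z)` have the same law, which forces `E[Z | (Y j)_{j ≠ i}] = 0`. -/

open WithLp

namespace Matrix.PosSemidef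

variable {n : Type*} [Fintype n] [DecidableEq n] {A : Matrix n n ℝ}

theorem sqrt_mul_self (hA : A.PosSemidef) : hA.sqrt * hA.sqrt = A := by
  set U : Matrix n n ℝ := (hA.1.eigenvectorUnitary : Matrix n n ℝ)
  set D : Matrix n n ℝ := diagonal (RCLike.ofReal ∘ (√·) ∘ hA.1.eigenvalues)
  have hU : star U * U = 1 := Unitary.coe_star_mul_self _
  have hD : D * D = diagonal (RCLike.ofReal ∘ hA.1.eigenvalues) := by
    rw [diagonal_mul_diagonal]
    congr 1
    funext k
    simp [Real.mul_self_sqrt (hA.eigenvalues_nonneg k)]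
  calc hA.sqrt * hA.sqrt = U * D * (star U * U) * D * star U := by
        simp only [sqrt, U, D, Matrix.mul_assoc]
    _ = A := by
        rw [hU, Matrix.mul_one, Matrix.mul_assoc U, hD]
        conv_rhs => rw [hA.1.spectral_theorem]
        rfl

theorem transpose_sqrt (hA : A.PosSemidef) : hA.sqrtᵀ = hA.sqrt := by
  simp [sqrt, transpose_mul, Matrix.mul_assoc, star_eq_conjTranspose]

end Matrix.PosSemidef

theorem Matrix.IsSymm.inv_mulVec_row {ι α : Type*} [Fintype ι] [DecidableEq ι] [CommRing α]
    {B : Matrix ι ι α} (hB : B.IsSymm) (hdet : IsUnit B.det) (i : ι) :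
    B⁻¹ *ᵥ B i = Pi.single i 1 := by
  have hrow : B i = B *ᵥ Pi.single i 1 := by
    rw [mulVec_single_one]
    funext j
    exact hB.apply j i
  rw [hrow, mulVec_mulVec, nonsing_inv_mul B hdet, one_mulVec]

theorem one_sub_smul_row_dotProduct {ι α : Type*} [Fintype ι] [DecidableEq ι] [CommRing α]
    {W : Matrix ι ι α} {i : ι} (hWii : W i i = 0) (η : α) (y : ι → α) :
    (1 - η • W) i ⬝ᵥ y = y i - η * ∑ j ∈ Finset.univ.erase i, W i j * y j := by
  rw [Finset.sum_erase _ (by simp [hWii])]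
  simp [dotProduct, Finset.mul_sum, sub_mul, Finset.sum_sub_distrib, one_apply, mul_assoc]

namespace Submodule

variable {E : Type*} [NormedAddCommGroup E] [InnerProductSpace ℝ E]

theorem exists_reflection_orthogonalComplement_singleton_eq_add_smul (u v : E) :
    ∃ t : ℝ, (ℝ ∙ u)ᗮ.reflection v = v + t • u := by
  refine ⟨-(2 * (inner ℝ u v / ‖u‖ ^ 2)), ?_⟩
  rw [reflection_orthogonal_apply, reflection_singleton_apply]
  simp only [RCLike.ofReal_real_eq_id, id_eq, neg_smul, mul_smul, two_smul]
  abel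

theorem inner_reflection_orthogonalComplement_singleton (u v : E) :
    inner ℝ u ((ℝ ∙ u)ᗮ.reflection v) = -inner ℝ u v := by
  have h := ((ℝ ∙ u)ᗮ.reflection).inner_map_map u ((ℝ ∙ u)ᗮ.reflection v)
  rw [reflection_reflection, reflection_orthogonalComplement_singleton_eq_neg,
    inner_neg_left] at h
  linarith

end Submodule

theorem stdGaussian_eq_map_ofLp (n : ℕ) :
    stdGaussian n = (ProbabilityTheory.stdGaussian (EuclideanSpace ℝ (Fin n))).map ofLp := by
  rw [← map_pi_eq_stdGaussian, Measure.map_map (by fun_prop) (by fun_prop)]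
  exact Measure.map_id.symm

theorem measurePreserving_stdGaussian_linearIsometryEquiv {n : ℕ}
    (f : EuclideanSpace ℝ (Fin n) ≃ₗᵢ[ℝ] EuclideanSpace ℝ (Fin n)) :
    MeasurePreserving (fun x => ofLp (f (toLp 2 x))) (stdGaussian n) (stdGaussian n) := by
  refine ⟨by fun_prop, ?_⟩
  rw [stdGaussian_eq_map_ofLp, Measure.map_map (by fun_prop) (by fun_prop)]
  calc _ = ((ProbabilityTheory.stdGaussian _).map f).map ofLp := by
        rw [Measure.map_map (by fun_prop) f.continuous.measurable]; rfl
    _ = _ := by rw [stdGaussian_map]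

theorem integrable_dotProduct_stdGaussian {n : ℕ} (v : Fin n → ℝ) :
    Integrable (fun x => v ⬝ᵥ x) (stdGaussian n) := by
  simp_rw [dotProduct]
  exact integrable_finsetSum _ fun j _ => (integrable_eval IsGaussian.integrable_id).const_mul _

theorem map_prodMk_neg_dotProduct_stdGaussian {n : ℕ} {β : Type*} [MeasurableSpace β]
    {A : (Fin n → ℝ) → β} (hA : Measurable A) {c : Fin n → ℝ}
    (hAc : ∀ x (t : ℝ), A (x + t • c) = A x) :
    (stdGaussian n).map (fun x => (A x, -(c ⬝ᵥ x))) =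
      (stdGaussian n).map (fun x => (A x, c ⬝ᵥ x)) := by
  set ρ := (ℝ ∙ toLp 2 c)ᗮ.reflection
  have hρ : ∀ x, (A (ofLp (ρ (toLp 2 x))), c ⬝ᵥ ofLp (ρ (toLp 2 x))) = (A x, -(c ⬝ᵥ x)) := by
    intro x
    obtain ⟨t, ht⟩ :=
      Submodule.exists_reflection_orthogonalComplement_singleton_eq_add_smul (toLp 2 c) (toLp 2 x)
    have hdot := Submodule.inner_reflection_orthogonalComplement_singleton (toLp 2 c) (toLp 2 x)
    simp only [EuclideanSpace.inner_eq_star_dotProduct, star_trivial, dotProduct_comm _ c] at hdot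
    rw [hdot, ht, ofLp_add, ofLp_smul, ofLp_toLp, ofLp_toLp, hAc]
  conv_rhs => rw [← (measurePreserving_stdGaussian_linearIsometryEquiv ρ).map_eq,
    Measure.map_map (by fun_prop) (by fun_prop)]
  exact congrArg (Measure.map · _) (funext fun x => (hρ x).symm)

theorem condExp_comap_eq_zero_of_map_prodMk_neg {Ω β : Type*} [MeasurableSpace Ω]
    [MeasurableSpace β] {P : Measure Ω} [IsFiniteMeasure P] {V : Ω → β} {Z : Ω → ℝ}
    (hV : Measurable V) (hZ : Integrable Z P)
    (hsymm : P.map (fun ω => (V ω, -Z ω)) = P.map (fun ω => (V ω, Z ω))) :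
    P[Z | MeasurableSpace.comap V inferInstance] =ᵐ[P] 0 := by
  have hset : ∀ A, MeasurableSet A → ∫ ω in V ⁻¹' A, Z ω ∂P = 0 := by
    intro A hA
    have hF : Measurable ((A ×ˢ Set.univ).indicator (Prod.snd : β × ℝ → ℝ)) :=
      measurable_snd.indicator (hA.prod MeasurableSet.univ)
    have hpush : ∀ z : Ω → ℝ, AEMeasurable z P → ∫ ω in V ⁻¹' A, z ω ∂P =
        ∫ p, (A ×ˢ Set.univ).indicator Prod.snd p ∂(P.map fun ω => (V ω, z ω)) := by
      intro z hz
      rw [integral_map (hV.aemeasurable.prodMk hz) hF.aestronglyMeasurable,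
        ← integral_indicator (hV hA)]
      congr 1
      funext ω
      simp [Set.indicator]
    have h := hpush (fun ω => -Z ω) hZ.aemeasurable.neg
    rw [hsymm, ← hpush _ hZ.aemeasurable, integral_neg] at h
    linarith
  refine (ae_eq_condExp_of_forall_setIntegral_eq hV.comap_le hZ
    (fun _ _ _ => integrableOn_zero) ?_ aestronglyMeasurable_zero).symm
  rintro _ ⟨A, hA, rfl⟩ _
  simp [hset A hA]

theorem condExp_ae_eq_of_condExp_sub_ae_eq_zero {α : Type*} {m m₀ : MeasurableSpace α}
    {μ : Measure α} (hm : m ≤ m₀) [SigmaFinite (μ.trim hm)] {f g : α → ℝ}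
    (hf : Integrable f μ) (hg : Integrable g μ) (hgm : StronglyMeasurable[m] g)
    (h : μ[f - g | m] =ᵐ[μ] 0) : μ[f | m] =ᵐ[μ] g := by
  filter_upwards [condExp_sub hf hg m, h] with x hsub hzero
  rw [condExp_of_stronglyMeasurable hm hgm hg, hzero] at hsub
  simpa [sub_eq_zero, eq_comm] using hsub

section LinearImageOfStdGaussian

variable {Ω : Type*} [MeasurableSpace Ω] {P : Measure Ω} {m n : ℕ}
  {M : Matrix (Fin m) (Fin n) ℝ} {Y : Ω → Fin m → ℝ}

theorem integrable_dotProduct_of_map_eq_stdGaussian_map (hY : Measurable Y)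
    (hlaw : P.map Y = (stdGaussian n).map (M *ᵥ ·)) (v : Fin m → ℝ) :
    Integrable (fun ω => v ⬝ᵥ Y ω) P := by
  have hv : Integrable (fun y => v ⬝ᵥ y) ((stdGaussian n).map (M *ᵥ ·)) := by
    rw [integrable_map_measure (by fun_prop) (by fun_prop)]
    simpa [Function.comp_def, dotProduct_mulVec] using integrable_dotProduct_stdGaussian (v ᵥ* M)
  rw [← hlaw] at hv
  exact (integrable_map_measure (by fun_prop) hY.aemeasurable).mp hv

/-- `(M * Mᵀ) *ᵥ d` is the covariance of `Y` with `d ⬝ᵥ Y`. -/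
theorem condExp_dotProduct_eq_zero_of_map_eq_stdGaussian_map [IsFiniteMeasure P] {β : Type*}
    [MeasurableSpace β] (hY : Measurable Y) (hlaw : P.map Y = (stdGaussian n).map (M *ᵥ ·))
    (d : Fin m → ℝ) {A : (Fin m → ℝ) → β} (hA : Measurable A)
    (hAd : ∀ y (t : ℝ), A (y + t • ((M * Mᵀ) *ᵥ d)) = A y) :
    P[fun ω => d ⬝ᵥ Y ω | MeasurableSpace.comap (fun ω => A (Y ω)) inferInstance] =ᵐ[P] 0 := by
  refine condExp_comap_eq_zero_of_map_prodMk_neg (by fun_prop)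
    (integrable_dotProduct_of_map_eq_stdGaussian_map hY hlaw d) ?_
  have hpush : ∀ Φ : (Fin m → ℝ) → β × ℝ, Measurable Φ →
      P.map (fun ω => Φ (Y ω)) = (stdGaussian n).map (fun x => Φ (M *ᵥ x)) := by
    intro Φ hΦ
    change P.map (Φ ∘ Y) = _
    rw [← Measure.map_map hΦ hY, hlaw, Measure.map_map hΦ (by fun_prop)]
    rfl
  rw [hpush (fun y => (A y, -(d ⬝ᵥ y))) (by fun_prop), hpush (fun y => (A y, d ⬝ᵥ y)) (by fun_prop)]
  simp only [dotProduct_mulVec]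
  refine map_prodMk_neg_dotProduct_stdGaussian (A := fun x => A (M *ᵥ x)) (by fun_prop)
    fun x t => ?_
  rw [mulVec_add, mulVec_smul, ← mulVec_transpose, mulVec_mulVec, hAd]

end LinearImageOfStdGaussian

theorem car_conditional_mean_general
    {Ω : Type*} [MeasurableSpace Ω] (P : Measure Ω) [IsProbabilityMeasure P]
    {n : ℕ} (W : Matrix (Fin n) (Fin n) ℝ)
    (hWdiag : ∀ i, W i i = 0)
    (η lam : ℝ) (hlam : 0 < lam) (hpd : (1 - η • W).PosDef)
    (Y : Ω → (Fin n → ℝ)) (hYmeas : Measurable Y)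
    (hYlaw : P.map Y = gaussianOfCov (lam • (1 - η • W)⁻¹))
    (i : Fin n) :
    P[(fun ω => Y ω i) |
        MeasurableSpace.comap (fun ω => fun j : {j : Fin n // j ≠ i} => Y ω j)
          inferInstance]
      =ᵐ[P] fun ω => η * ∑ j ∈ Finset.univ.erase i, W i j * Y ω j := by
  set V := fun ω (j : {j : Fin n // j ≠ i}) => Y ω j
  set g := fun ω => η * ∑ j ∈ Finset.univ.erase i, W i j * Y ω j
  have hS : (lam • (1 - η • W)⁻¹).PosSemidef := hpd.inv.posSemidef.smul hlam.le
  have hlaw : P.map Y = (stdGaussian n).map (hS.sqrt *ᵥ ·) := by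
    rw [hYlaw, gaussianOfCov, dif_pos hS]
  have hSd : (lam • (1 - η • W)⁻¹) *ᵥ (1 - η • W) i = lam • Pi.single i 1 := by
    rw [smul_mulVec, (isHermitian_iff_isSymm.mp hpd.1).inv_mulVec_row
      ((isUnit_iff_isUnit_det _).mp hpd.isUnit) i]
  have hresidual : P[fun ω => (1 - η • W) i ⬝ᵥ Y ω | MeasurableSpace.comap V inferInstance]
      =ᵐ[P] 0 := by
    refine condExp_dotProduct_eq_zero_of_map_eq_stdGaussian_map hYmeas hlaw _
      (A := fun y (j : {j : Fin n // j ≠ i}) => y j) (by fun_prop) fun y t => ?_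
    rw [hS.transpose_sqrt, hS.sqrt_mul_self, hSd]
    funext j
    simp [j.2]
  have hYint : ∀ k, Integrable (fun ω => Y ω k) P := fun k => by
    simpa using integrable_dotProduct_of_map_eq_stdGaussian_map hYmeas hlaw (Pi.single k 1)
  have hgint : Integrable g P :=
    (integrable_finsetSum _ fun j _ => (hYint j).const_mul _).const_mul η
  have hgm : StronglyMeasurable[MeasurableSpace.comap V inferInstance] g := by
    refine Measurable.stronglyMeasurable ((Finset.measurable_sum _ fun j hj => ?_).const_mul η)
    exact ((measurable_pi_apply (⟨j, Finset.ne_of_mem_erase hj⟩ : {j : Fin n // j ≠ i})).comp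
      (comap_measurable V)).const_mul _
  refine condExp_ae_eq_of_condExp_sub_ae_eq_zero (by fun_prop : Measurable V).comap_le (hYint i)
    hgint hgm ?_
  simp_rw [one_sub_smul_row_dotProduct (hWdiag i)] at hresidual
  exact hresidual

/-- If `Y ~ N(0, λ (I - ηW)⁻¹)` with `W` symmetric, zero diagonal, and
`I - ηW` positive definite, then for each `i` the conditional expectation of `Y_i`
given the σ-algebra generated by `(Y_j)_{j ≠ i}` is `η ∑_{j ≠ i} W i j · Y_j` a.s. -/
theorem car_conditional_mean
    {Ω : Type*} [MeasurableSpace Ω] (P : Measure Ω) [IsProbabilityMeasure P]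
    {n : ℕ} (hn : 1 ≤ n) (W : Matrix (Fin n) (Fin n) ℝ)
    (hW : W.IsHermitian) (hWdiag : ∀ i, W i i = 0)
    (η lam : ℝ) (hlam : 0 < lam) (hpd : (1 - η • W).PosDef)
    (Y : Ω → (Fin n → ℝ)) (hYmeas : Measurable Y)
    (hYlaw : P.map Y = gaussianOfCov (lam • (1 - η • W)⁻¹))
    (i : Fin n) :
    P[(fun ω => Y ω i) |
        MeasurableSpace.comap (fun ω => fun j : {j : Fin n // j ≠ i} => Y ω j)
          inferInstance]
      =ᵐ[P] fun ω => η * ∑ j ∈ Finset.univ.erase i, W i j * Y ω j :=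
  car_conditional_mean_general P W hWdiag η lam hlam hpd Y hYmeas hYlaw i
end
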